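/- Let g ≥ 2 and b > 1 be integers with gcd(b,g) = 1. There exists a positive integer c such that for all positive integers t, ord_g(b^{c+t}) = b^t·ord_g(b^c). -/

import Mathlib

/-!
Put `A n = ordg g (b ^ n)` and `x = g ^ A 2`. As `b ^ 2 ∣ x - 1`, lifting the exponent gives
`v_p (x ^ j - 1) = v_p ((x - 1) * j)` at every prime `p ∣ b`, so for `n ≥ 2` the order `A n` is
`A 2` times the least `j` with `b ^ n ∣ (x - 1) * j`, namely `b ^ n / gcd (b ^ n) (x - 1)`.
This gcd is nondecreasing in `n` and bounded by `x - 1`, hence eventually constant, and from then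
on every step multiplies `A n` by `b`.
-/

/-- `ordg g m = min {n ≥ 1 : g^n ≡ 1 (mod m)}`, the multiplicative order of `g` modulo `m`. -/
noncomputable def ordg (g m : ℕ) : ℕ := sInf {n : ℕ | 0 < n ∧ g ^ n ≡ 1 [MOD m]}

-- `p ∣ x - 1` would not do for `p = 2`: `v_2 (3 ^ 2 - 1) = 3 ≠ v_2 (3 - 1) + v_2 2`.
theorem padicValNat.pow_sub_one_of_sq_dvd {p x n : ℕ} [hp : Fact p.Prime] (hx : 1 < x)
    (hpx : p ^ 2 ∣ x - 1) (hn : n ≠ 0) :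
    padicValNat p (x ^ n - 1) = padicValNat p (x - 1) + padicValNat p n := by
  have hpx₁ : p ∣ x - 1 := (dvd_pow_self p two_ne_zero).trans hpx
  have hpx₀ : ¬p ∣ x := fun h =>
    hp.out.not_dvd_one (by simpa [Nat.sub_sub_self hx.le] using Nat.dvd_sub h hpx₁)
  rcases hp.out.eq_two_or_odd' with rfl | hodd
  · rw [← Nat.cast_inj (R := ℕ∞), Nat.cast_add, padicValNat_eq_emultiplicity hn,
      padicValNat_eq_emultiplicity (Nat.sub_ne_zero_of_lt hx),
      padicValNat_eq_emultiplicity (Nat.sub_ne_zero_of_lt (Nat.one_lt_pow hn hx)),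
      ← Int.natCast_emultiplicity 2, ← Int.natCast_emultiplicity 2,
      ← Int.natCast_emultiplicity 2]
    push_cast [Nat.cast_sub (Nat.one_le_pow _ _ (by omega) : 1 ≤ x ^ n), Nat.cast_sub hx.le]
    have h4 : (4 : ℤ) ∣ x - 1 := by
      have := Int.natCast_dvd_natCast.mpr hpx
      push_cast [Nat.cast_sub hx.le] at this
      simpa using this
    simpa using Int.two_pow_sub_pow' (y := 1) n h4 (by exact_mod_cast hpx₀)
  · simpa using padicValNat.pow_sub_pow hodd hx (by simpa using hpx₁) hpx₀ hn

theorem Nat.dvd_pow_sub_one_iff_dvd_mul {d x j : ℕ} (hd : d ≠ 0) (hx : 1 < x)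
    (hdx : ∀ p, p.Prime → p ∣ d → p ^ 2 ∣ x - 1) : d ∣ x ^ j - 1 ↔ d ∣ (x - 1) * j := by
  rcases Nat.eq_zero_or_pos j with rfl | hj
  · simp
  rw [← Nat.factorization_prime_le_iff_dvd hd (Nat.sub_ne_zero_of_lt (Nat.one_lt_pow hj.ne' hx)),
    ← Nat.factorization_prime_le_iff_dvd hd (mul_ne_zero (Nat.sub_ne_zero_of_lt hx) hj.ne')]
  refine forall₂_congr fun p hp => ?_
  by_cases hpd : p ∣ d
  · have := Fact.mk hp
    simp only [Nat.factorization_def _ hp]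
    rw [padicValNat.mul (Nat.sub_ne_zero_of_lt hx) hj.ne',
      padicValNat.pow_sub_one_of_sq_dvd hx (hdx p hp hpd) hj.ne']
  · simp [Nat.factorization_eq_zero_of_not_dvd hpd]

theorem Nat.dvd_mul_iff_div_gcd_dvd {m y j : ℕ} (hm : m ≠ 0) : m ∣ y * j ↔ m / m.gcd y ∣ j := by
  have hd : 0 < m.gcd y := Nat.gcd_pos_of_pos_left y (Nat.pos_of_ne_zero hm)
  have hcop := Nat.coprime_div_gcd_div_gcd (m := m) (n := y) hd
  calc m ∣ y * j ↔ m.gcd y * (m / m.gcd y) ∣ m.gcd y * (y / m.gcd y * j) := by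
        rw [← mul_assoc, Nat.mul_div_cancel' (Nat.gcd_dvd_left m y),
          Nat.mul_div_cancel' (Nat.gcd_dvd_right m y)]
    _ ↔ m / m.gcd y ∣ y / m.gcd y * j := Nat.mul_dvd_mul_iff_left hd
    _ ↔ m / m.gcd y ∣ j := hcop.dvd_mul_left

theorem Nat.exists_forall_ge_eq_of_monotone {f : ℕ → ℕ} (hf : Monotone f)
    (hbdd : BddAbove (Set.range f)) : ∃ c, ∀ n, c ≤ n → f n = f c := by
  obtain ⟨c, hc⟩ := Nat.sSup_mem (Set.range_nonempty f) hbdd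
  exact ⟨c, fun n hn => le_antisymm (hc ▸ le_csSup hbdd (Set.mem_range_self n)) (hf hn)⟩

theorem Nat.exists_forall_ge_gcd_pow_eq (b : ℕ) {y : ℕ} (hy : y ≠ 0) :
    ∃ c, ∀ n, c ≤ n → (b ^ n).gcd y = (b ^ c).gcd y := by
  refine Nat.exists_forall_ge_eq_of_monotone (fun n m hnm => ?_) ⟨y, ?_⟩
  · exact Nat.le_of_dvd (Nat.gcd_pos_of_pos_right _ (Nat.pos_of_ne_zero hy))
      (Nat.gcd_dvd_gcd_of_dvd_left _ (pow_dvd_pow b hnm))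
  · rintro _ ⟨n, rfl⟩
    exact Nat.le_of_dvd (Nat.pos_of_ne_zero hy) (Nat.gcd_dvd_right _ _)

theorem modEq_one_iff_unitOfCoprime_pow_eq_one {g m : ℕ} (h : g.Coprime m) (k : ℕ) :
    g ^ k ≡ 1 [MOD m] ↔ ZMod.unitOfCoprime g h ^ k = 1 := by
  rw [← ZMod.natCast_eq_natCast_iff, Units.ext_iff]
  simp

theorem ordg_eq_orderOf {g m : ℕ} [NeZero m] (h : g.Coprime m) :
    ordg g m = orderOf (ZMod.unitOfCoprime g h) := by
  have hmem : orderOf (ZMod.unitOfCoprime g h) ∈ {n : ℕ | 0 < n ∧ g ^ n ≡ 1 [MOD m]} :=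
    ⟨orderOf_pos _, (modEq_one_iff_unitOfCoprime_pow_eq_one h _).mpr (pow_orderOf_eq_one _)⟩
  obtain ⟨hpos, hpow⟩ := Nat.sInf_mem ⟨_, hmem⟩
  exact le_antisymm (Nat.sInf_le hmem)
    (orderOf_le_of_pow_eq_one hpos ((modEq_one_iff_unitOfCoprime_pow_eq_one h _).mp hpow))

theorem ordg_pos {g m : ℕ} [NeZero m] (h : g.Coprime m) : 0 < ordg g m :=
  ordg_eq_orderOf h ▸ orderOf_pos _

theorem ordg_dvd_iff {g m k : ℕ} [NeZero m] (h : g.Coprime m) :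
    ordg g m ∣ k ↔ g ^ k ≡ 1 [MOD m] := by
  rw [ordg_eq_orderOf h, orderOf_dvd_iff_pow_eq_one, modEq_one_iff_unitOfCoprime_pow_eq_one h]

theorem ordg_pow_eq_mul_div_gcd {g b n : ℕ} [NeZero b] (hg : 1 < g) (hgb : g.Coprime b)
    (hn : 2 ≤ n) :
    ordg g (b ^ n) = ordg g (b ^ 2) * (b ^ n / (b ^ n).gcd (g ^ ordg g (b ^ 2) - 1)) := by
  have hdvd : ∀ n k, ordg g (b ^ n) ∣ k ↔ b ^ n ∣ g ^ k - 1 := fun n k => by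
    rw [ordg_dvd_iff (hgb.pow_right n), Nat.ModEq.comm,
      Nat.modEq_iff_dvd' (Nat.one_le_pow _ _ (by omega))]
  have hA : 0 < ordg g (b ^ 2) := ordg_pos (hgb.pow_right 2)
  have hbx : b ^ 2 ∣ g ^ ordg g (b ^ 2) - 1 := (hdvd 2 _).mp dvd_rfl
  refine Nat.dvd_right_iff_eq.mp fun k => ?_
  rw [hdvd]
  by_cases hk : ordg g (b ^ 2) ∣ k
  · obtain ⟨j, rfl⟩ := hk
    rw [pow_mul, Nat.dvd_pow_sub_one_iff_dvd_mul (NeZero.ne _) (Nat.one_lt_pow hA.ne' hg),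
      Nat.dvd_mul_iff_div_gcd_dvd (NeZero.ne _), Nat.mul_dvd_mul_iff_left hA]
    intro p hp hpb
    exact (pow_dvd_pow_of_dvd (hp.dvd_of_dvd_pow hpb) 2).trans hbx
  · exact iff_of_false (fun h => hk ((hdvd 2 k).mpr ((pow_dvd_pow b hn).trans h)))
      (fun h => hk (dvd_of_mul_right_dvd h))

theorem exists_stable_level_general (g b : ℕ) (hg : 2 ≤ g) (hbg : Nat.gcd b g = 1) :
    ∃ c : ℕ, 0 < c ∧ ∀ t : ℕ, 0 < t → ordg g (b ^ (c + t)) = b ^ t * ordg g (b ^ c) := by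
  have : NeZero b := ⟨by rintro rfl; simp at hbg; omega⟩
  have hgb : g.Coprime b := Nat.coprime_comm.mp hbg
  have hy : g ^ ordg g (b ^ 2) - 1 ≠ 0 :=
    Nat.sub_ne_zero_of_lt (Nat.one_lt_pow (ordg_pos (hgb.pow_right 2)).ne' hg)
  obtain ⟨c₀, hc₀⟩ := Nat.exists_forall_ge_gcd_pow_eq b hy
  set c := max c₀ 2
  refine ⟨c, by omega, fun t _ => ?_⟩
  have hgcd := (hc₀ (c + t) (by omega)).trans (hc₀ c (by omega)).symm
  rw [ordg_pow_eq_mul_div_gcd (n := c + t) hg hgb (by omega),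
    ordg_pow_eq_mul_div_gcd (n := c) hg hgb (by omega), hgcd,
    pow_add, Nat.mul_div_right_comm (Nat.gcd_dvd_left _ _)]
  ring

/-- For `g ≥ 2`, `b > 1` with `gcd(b,g) = 1`, there exists a positive
integer `c` such that `ord_g(b^{c+t}) = b^t·ord_g(b^c)` for all positive integers `t`. -/
theorem exists_stable_level (g b : ℕ) (hg : 2 ≤ g) (hb : 1 < b) (hbg : Nat.gcd b g = 1) :
    ∃ c : ℕ, 0 < c ∧ ∀ t : ℕ, 0 < t → ordg g (b ^ (c + t)) = b ^ t * ordg g (b ^ c) :=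
  exists_stable_level_general g b hg hbg
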